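/- Let Ω ⊂ ℝ^(2n+1−k) be open, φ : Ω → ℝ^k continuous, and a ∈ Ω. Assume φ is intrinsic differentiable at a with intrinsic Jacobian J^φφ(a). Fix j ∈ {1,…,2n−k} and let γ : [−δ,δ] → Ω be any integral curve of the vector field W_j^φ with γ(0) = a. Then for every i = 1,…,k, lim_{s→0} (φ_i(γ(s)) − φ_i(γ(0)))/s = [J^φφ(a)]_{i,j}. -/

import Mathlib

open scoped BigOperators
open MeasureTheory Filter Topology

noncomputable section

namespace HeisGraph

/-! ### Points of the Heisenberg group ℍⁿ, identified with ℝ^{2n+1} -/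

/-- Index type for the coordinates of a point of ℍⁿ: `x`-coordinates, `y`-coordinates
and the vertical coordinate `t`. -/
abbrev HIdxT (n : ℕ) := Sum (Fin n) (Sum (Fin n) Unit)

/-- ℍⁿ as a Euclidean space (so that the Euclidean norm is available). -/
abbrev HP (n : ℕ) := EuclideanSpace ℝ (HIdxT n)

variable {n k : ℕ}

def xPart (p : HP n) (i : Fin n) : ℝ := p (Sum.inl i)
def yPart (p : HP n) (i : Fin n) : ℝ := p (Sum.inr (Sum.inl i))
def tPart (p : HP n) : ℝ := p (Sum.inr (Sum.inr ()))

def mkH (x y : Fin n → ℝ) (t : ℝ) : HP n :=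
  WithLp.toLp 2 (fun i => Sum.elim x (Sum.elim y (fun _ => t)) i)

/-- The Heisenberg group product on ℝ^{2n+1}. -/
def hMul (p q : HP n) : HP n :=
  mkH (fun i => xPart p i + xPart q i) (fun i => yPart p i + yPart q i)
    (tPart p + tPart q + (1 / 2) * ∑ i : Fin n, (xPart p i * yPart q i - xPart q i * yPart p i))

/-- The Heisenberg group inverse: `p⁻¹ = -p`. -/
def hInv (p : HP n) : HP n := -p

/-- The intrinsic dilations of ℍⁿ. -/
def dilH (lam : ℝ) (p : HP n) : HP n :=
  mkH (fun i => lam * xPart p i) (fun i => lam * yPart p i) (lam ^ 2 * tPart p)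

/-- The homogeneous norm `‖p‖_∞ = max { |(x,y)| , |t|^{1/2} }`. -/
def normH (p : HP n) : ℝ :=
  max (Real.sqrt (∑ i, xPart p i ^ 2 + ∑ i, yPart p i ^ 2)) (Real.sqrt |tPart p|)

/-- The homogeneous distance `d_∞(p,q) = ‖q⁻¹ · p‖_∞`. -/
def dInf (p q : HP n) : ℝ := normH (hMul (hInv q) p)

/-! ### Points of 𝕄 ≅ ℝ^{2n+1-k}: coordinates (v_{k+1..n}, η_{1..k}, w_{k+1..n}, τ) -/

abbrev MIdxT (n k : ℕ) := Sum (Fin (n - k)) (Sum (Fin k) (Sum (Fin (n - k)) Unit))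

abbrev MP (n k : ℕ) := EuclideanSpace ℝ (MIdxT n k)

def vPart (a : MP n k) (j : Fin (n - k)) : ℝ := a (Sum.inl j)
def etaPart (a : MP n k) (i : Fin k) : ℝ := a (Sum.inr (Sum.inl i))
def wPart (a : MP n k) (j : Fin (n - k)) : ℝ := a (Sum.inr (Sum.inr (Sum.inl j)))
def tauPart (a : MP n k) : ℝ := a (Sum.inr (Sum.inr (Sum.inr ())))

def mkM (v : Fin (n - k) → ℝ) (η : Fin k → ℝ) (w : Fin (n - k) → ℝ) (τ : ℝ) : MP n k :=
  WithLp.toLp 2 (fun i => Sum.elim v (Sum.elim η (Sum.elim w (fun _ => τ))) i)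

/-- The embedding `i : ℝ^{2n+1-k} → ℍⁿ` onto the subgroup 𝕄 (`k` zeros among the
`x`-coordinates first). -/
def iota (a : MP n k) : HP n :=
  mkH (fun i => if h : (i : ℕ) < k then 0 else vPart a ⟨(i : ℕ) - k, by have := i.isLt; omega⟩)
    (fun i => if h : (i : ℕ) < k then etaPart a ⟨(i : ℕ), h⟩
      else wPart a ⟨(i : ℕ) - k, by have := i.isLt; omega⟩)
    (tauPart a)

/-- The embedding `j : ℝ^k → ℍⁿ` onto the horizontal subgroup ℍ. -/
def jmap (h : EuclideanSpace ℝ (Fin k)) : HP n :=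
  mkH (fun i => if hi : (i : ℕ) < k then h ⟨(i : ℕ), hi⟩ else 0) (fun _ => 0) 0

/-- The projection `π_𝕄 : ℍⁿ → 𝕄` determined by the unique factorization `p = m·h`,
`m ∈ 𝕄`, `h ∈ ℍ` (written in the coordinates of `MP n k`). -/
def piM (hk : k ≤ n) (p : HP n) : MP n k :=
  mkM (fun j => xPart p ⟨(j : ℕ) + k, by have := j.isLt; omega⟩)
    (fun i => yPart p ⟨(i : ℕ), lt_of_lt_of_le i.isLt hk⟩)
    (fun j => yPart p ⟨(j : ℕ) + k, by have := j.isLt; omega⟩)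
    (tPart p + (1 / 2) * ∑ i : Fin k,
      xPart p ⟨(i : ℕ), lt_of_lt_of_le i.isLt hk⟩ * yPart p ⟨(i : ℕ), lt_of_lt_of_le i.isLt hk⟩)

/-- The unit vertical vector of `MP n k`. -/
def tauUnit : MP n k := mkM 0 0 0 1

/-- The product `⋆` induced on ℝ^{2n+1-k} by the group structure of 𝕄. -/
def starMul (a b : MP n k) : MP n k :=
  a + b + ((1 / 2) * ∑ j : Fin (n - k), (vPart a j * wPart b j - vPart b j * wPart a j)) • tauUnit

/-- The dilations `δ_λ^⋆` induced on ℝ^{2n+1-k}. -/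
def dilStar (lam : ℝ) (a : MP n k) : MP n k :=
  mkM (fun j => lam * vPart a j) (fun i => lam * etaPart a i) (fun j => lam * wPart a j)
    (lam ^ 2 * tauPart a)

/-- The homogeneous norm of 𝕄 read on `MP n k` (it equals `normH (iota a)`). -/
def normM (a : MP n k) : ℝ :=
  max (Real.sqrt (∑ j, vPart a j ^ 2 + ∑ i, etaPart a i ^ 2 + ∑ j, wPart a j ^ 2))
    (Real.sqrt |tauPart a|)

/-- The graph map `Φ(a) = i(a) · j(φ(a))`. -/
def graphMap (φ : MP n k → EuclideanSpace ℝ (Fin k)) (a : MP n k) : HP n :=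
  hMul (iota a) (jmap (φ a))

/-- The graph distance `d_φ(a,b) = ‖π_𝕄(Φ(b)⁻¹ · Φ(a))‖_∞`. -/
def dPhi (hk : k ≤ n) (φ : MP n k → EuclideanSpace ℝ (Fin k)) (a b : MP n k) : ℝ :=
  normM (piM hk (hMul (hInv (graphMap φ b)) (graphMap φ a)))

/-- `L : ℝ^{2n+1-k} → ℝ^k` is ⋆-linear: a homomorphism for `⋆`, homogeneous of degree 1
for the dilations `δ_λ^⋆`. -/
def IsStarLinear (L : MP n k → EuclideanSpace ℝ (Fin k)) : Prop :=
  (∀ a b, L (starMul a b) = L a + L b) ∧ ∀ lam > (0 : ℝ), ∀ a, L (dilStar lam a) = lam • L a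

/-! ### Horizontal coordinates, matrices, cubes -/

/-- Index type for the `2n-k` horizontal coordinates of `MP n k` (τ deleted). -/
abbrev HorIdx (n k : ℕ) := Sum (Fin (n - k)) (Sum (Fin k) (Fin (n - k)))

/-- The projection `π` deleting the vertical coordinate τ. -/
def piHor (a : MP n k) : HorIdx n k → ℝ :=
  Sum.elim (fun j => vPart a j) (Sum.elim (fun i => etaPart a i) (fun j => wPart a j))

/-- The ⋆-linear map associated to a `k × (2n-k)` matrix: `L(a) = M · π(a)`. -/
def ofMatrix (M : Matrix (Fin k) (HorIdx n k) ℝ) (a : MP n k) : EuclideanSpace ℝ (Fin k) :=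
  WithLp.toLp 2 (fun i => M.mulVec (piHor a) i)

/-- The open coordinate cube `I_r(a)`. -/
def cube (r : ℝ) (a : MP n k) : Set (MP n k) := {p | ∀ i, |p i - a i| < r}

/-- The closed coordinate cube `cl(I_r(a))`. -/
def closedCube (r : ℝ) (a : MP n k) : Set (MP n k) := {p | ∀ i, |p i - a i| ≤ r}

/-! ### Intrinsic differentiability -/

/-- The quantitative condition expressing uniform intrinsic differentiability of `φ`
at `a₀` (relative to `Ω`) with intrinsic differential `L`:
`lim_{r→0} sup_{a,b ∈ I_r(a₀)∩Ω} |φ(b) - φ(a) - L(a⁻¹ ⋆ b)| / d_φ(b,a) = 0`. -/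
def UIDcond (hk : k ≤ n) (Ω : Set (MP n k)) (φ : MP n k → EuclideanSpace ℝ (Fin k))
    (a₀ : MP n k) (L : MP n k → EuclideanSpace ℝ (Fin k)) : Prop :=
  ∀ ε > (0 : ℝ), ∃ r > (0 : ℝ), ∀ a ∈ cube r a₀ ∩ Ω, ∀ b ∈ cube r a₀ ∩ Ω,
    ‖φ b - φ a - L (starMul (-a) b)‖ ≤ ε * dPhi hk φ b a

/-- `φ` is uniformly intrinsic differentiable at `a₀`. -/
def UIDAt (hk : k ≤ n) (Ω : Set (MP n k)) (φ : MP n k → EuclideanSpace ℝ (Fin k))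
    (a₀ : MP n k) : Prop :=
  ∃ L, IsStarLinear L ∧ UIDcond hk Ω φ a₀ L

/-- `φ` is uniformly intrinsic differentiable at `a₀` with intrinsic Jacobian matrix `M`. -/
def UIDAtWith (hk : k ≤ n) (Ω : Set (MP n k)) (φ : MP n k → EuclideanSpace ℝ (Fin k))
    (a₀ : MP n k) (M : Matrix (Fin k) (HorIdx n k) ℝ) : Prop :=
  UIDcond hk Ω φ a₀ (ofMatrix M)

/-- The condition expressing intrinsic differentiability of `φ` at `a₀` with intrinsic
differential `L`: `lim_{a→a₀} |φ(a) - φ(a₀) - L(a₀⁻¹ ⋆ a)| / d_φ(a,a₀) = 0`. -/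
def IDcond (hk : k ≤ n) (Ω : Set (MP n k)) (φ : MP n k → EuclideanSpace ℝ (Fin k))
    (a₀ : MP n k) (L : MP n k → EuclideanSpace ℝ (Fin k)) : Prop :=
  ∀ ε > (0 : ℝ), ∃ δ > (0 : ℝ), ∀ a ∈ Ω, ‖a - a₀‖ < δ →
    ‖φ a - φ a₀ - L (starMul (-a₀) a)‖ ≤ ε * dPhi hk φ a a₀

/-- `φ` is intrinsic differentiable at `a₀`. -/
def IDAt (hk : k ≤ n) (Ω : Set (MP n k)) (φ : MP n k → EuclideanSpace ℝ (Fin k))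
    (a₀ : MP n k) : Prop :=
  ∃ L, IsStarLinear L ∧ IDcond hk Ω φ a₀ L

/-- `φ` is intrinsic differentiable at `a₀` with intrinsic Jacobian matrix `M`. -/
def IDAtWith (hk : k ≤ n) (Ω : Set (MP n k)) (φ : MP n k → EuclideanSpace ℝ (Fin k))
    (a₀ : MP n k) (M : Matrix (Fin k) (HorIdx n k) ℝ) : Prop :=
  IDcond hk Ω φ a₀ (ofMatrix M)

/-! ### The vector fields `W_j^φ` -/

/-- The `2n-k` vector fields `W^φ` on `MP n k`:
`W_j^φ = ∂_{v_j} - (1/2) w_j ∂_τ`, `∇^{φ_i} = ∂_{η_i} + φ_i ∂_τ`,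
`W^φ = ∂_{w_j} + (1/2) v_j ∂_τ`. -/
def Wfield (φ : MP n k → EuclideanSpace ℝ (Fin k)) (ℓ : HorIdx n k) (p : MP n k) : MP n k :=
  match ℓ with
  | Sum.inl j => mkM (Pi.single j 1) 0 0 (-(1 / 2) * wPart p j)
  | Sum.inr (Sum.inl i) => mkM 0 (Pi.single i 1) 0 (φ p i)
  | Sum.inr (Sum.inr j) => mkM 0 0 (Pi.single j 1) ((1 / 2) * vPart p j)

/-- For `ψ` of class C¹ (Euclidean sense), the intrinsic Jacobian matrix
`J^ψψ(m) = [(W_ℓ^ψ ψ_i)(m)]_{i,ℓ}`. -/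
def JC1 (ψ : MP n k → EuclideanSpace ℝ (Fin k)) (m : MP n k) :
    Matrix (Fin k) (HorIdx n k) ℝ :=
  Matrix.of fun i ℓ => fderiv ℝ ψ m (Wfield ψ ℓ m) i

/-- `φ` has `∂^{φ_ℓ}`-derivative `D` at `a`: along every integral curve of `W_ℓ^φ`
through `a` the difference quotients of `φ` converge to `D`. -/
def HasWDerivAt (Ω : Set (MP n k)) (φ : MP n k → EuclideanSpace ℝ (Fin k)) (ℓ : HorIdx n k)
    (a : MP n k) (D : EuclideanSpace ℝ (Fin k)) : Prop :=
  ∀ δ > (0 : ℝ), ∀ γ : ℝ → MP n k, γ 0 = a →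
    (∀ s ∈ Set.Ioo (-δ) δ, γ s ∈ Ω) →
    (∀ s ∈ Set.Ioo (-δ) δ, HasDerivAt γ (Wfield φ ℓ (γ s)) s) →
    Tendsto (fun s : ℝ => s⁻¹ • (φ (γ s) - φ a)) (𝓝[≠] (0 : ℝ)) (𝓝 D)

/-- The little-½-Hölder condition on `Ω`. -/
def LittleHolder (Ω : Set (MP n k)) (φ : MP n k → EuclideanSpace ℝ (Fin k)) : Prop :=
  ∀ Ω' : Set (MP n k), IsOpen Ω' → IsCompact (closure Ω') → closure Ω' ⊆ Ω →
    ∀ ε > (0 : ℝ), ∃ r > (0 : ℝ), ∀ a ∈ Ω', ∀ b ∈ Ω', a ≠ b → ‖a - b‖ ≤ r →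
      ‖φ a - φ b‖ ≤ ε * Real.sqrt ‖a - b‖

/-! ### `C¹_ℍ` functions on ℍⁿ -/

/-- The horizontal vector fields `X_i`, `Y_i` of ℍⁿ. -/
def Zfield (i : Sum (Fin n) (Fin n)) (p : HP n) : HP n :=
  match i with
  | Sum.inl i => mkH (Pi.single i 1) 0 (-(1 / 2) * yPart p i)
  | Sum.inr i => mkH 0 (Pi.single i 1) ((1 / 2) * xPart p i)

/-- `f : U → ℝ^k` is of class `C¹_ℍ` with horizontal derivatives `Df`: `f` is continuous
on `U`, the `Df p i` are continuous on `U` and represent the distributional derivatives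
of `f` along the horizontal vector fields. -/
def C1H (U : Set (HP n)) (f : HP n → EuclideanSpace ℝ (Fin k))
    (Df : HP n → Sum (Fin n) (Fin n) → EuclideanSpace ℝ (Fin k)) : Prop :=
  ContinuousOn f U ∧ (∀ i, ContinuousOn (fun p => Df p i) U) ∧
    ∀ (i : Sum (Fin n) (Fin n)) (j : Fin k) (ψ : HP n → ℝ),
      ContDiff ℝ (⊤ : ℕ∞) ψ → HasCompactSupport ψ → tsupport ψ ⊆ U →
      (∫ p in U, f p j * fderiv ℝ ψ p (Zfield i p)) = -∫ p in U, Df p i j * ψ p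

/-! ### The quasi-distance ρ_φ -/

/-- The function `ρ_φ(a,b)`. -/
def rhoPhi (φ : MP n k → EuclideanSpace ℝ (Fin k)) (a b : MP n k) : ℝ :=
  max
    (Real.sqrt (∑ j, (vPart a j - vPart b j) ^ 2 + ∑ i, (etaPart a i - etaPart b i) ^ 2 +
      ∑ j, (wPart a j - wPart b j) ^ 2))
    (Real.sqrt |tauPart a - tauPart b +
      (1 / 2) * ∑ i, (φ a i + φ b i) * (etaPart b i - etaPart a i) +
      (1 / 2) * ∑ j, (vPart a j * wPart b j - vPart b j * wPart a j)|)

/-! ### Families of exponential maps -/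

/-- A family of exponential maps for `φ` near `a`, as in Definition 4.2 of the paper. -/
structure ExpFamily (Ω : Set (MP n k)) (φ : MP n k → EuclideanSpace ℝ (Fin k))
    (a : MP n k) where
  δ₁ : ℝ
  δ₂ : ℝ
  pos : 0 < δ₂
  lt : δ₂ < δ₁
  sub : closedCube δ₁ a ⊆ Ω
  E : HorIdx n k → ℝ → MP n k → MP n k
  ω : HorIdx n k → MP n k → EuclideanSpace ℝ (Fin k)
  maps : ∀ ℓ, ∀ s ∈ Set.Icc (-δ₂) δ₂, ∀ b ∈ closedCube δ₂ a, E ℓ s b ∈ closedCube δ₁ a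
  start : ∀ ℓ, ∀ b ∈ closedCube δ₂ a, E ℓ 0 b = b
  isIntegral : ∀ ℓ, ∀ b ∈ closedCube δ₂ a, ∀ s ∈ Set.Icc (-δ₂) δ₂,
    HasDerivAt (fun r => E ℓ r b) (Wfield φ ℓ (E ℓ s b)) s
  contOmega : ∀ ℓ (i : Fin k), ContinuousOn (fun b => ω ℓ b i) Ω
  chain : ∀ ℓ, ∀ b ∈ closedCube δ₂ a, ∀ s ∈ Set.Icc (-δ₂) δ₂, ∀ i : Fin k,
    φ (E ℓ s b) i - φ b i = ∫ r in (0 : ℝ)..s, ω ℓ (E ℓ r b) i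

/-! ### Auxiliary lemmas for Statement 7 -/

section Statement7Aux

variable {n k : ℕ}

lemma euclid_abs_le {ι : Type*} [Fintype ι] (x : EuclideanSpace ℝ ι) (i : ι) :
    |x i| ≤ ‖x‖ := by
  rw [EuclideanSpace.norm_eq]
  have h1 : |x i| = Real.sqrt (‖x i‖ ^ 2) := by
    rw [Real.sqrt_sq_eq_abs, Real.norm_eq_abs, abs_abs]
  rw [h1]
  exact Real.sqrt_le_sqrt (Finset.single_le_sum (f := fun j => ‖x j‖ ^ 2)
    (fun j _ => by positivity) (Finset.mem_univ i))

lemma abs_le_abs_of_mem_uIcc {s u : ℝ} (h : u ∈ Set.uIcc 0 s) : |u| ≤ |s| := by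
  rcases Set.mem_uIcc.mp h with ⟨h1, h2⟩ | ⟨h1, h2⟩ <;>
    (rw [abs_le]; constructor <;> nlinarith [le_abs_self s, neg_abs_le s])

lemma sum_split (hk : k ≤ n) (f : Fin n → ℝ) :
    ∑ i : Fin n, f i
      = (∑ i : Fin k, f ⟨(i : ℕ), lt_of_lt_of_le i.isLt hk⟩)
        + ∑ j : Fin (n - k), f ⟨(j : ℕ) + k, by have := j.isLt; omega⟩ := by
  have h : k + (n - k) = n := by omega
  rw [← (finCongr h).sum_comp f, Fin.sum_univ_add]
  congr 1 <;>
    exact Finset.sum_congr rfl fun i _ => congrArg f (by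
      ext; simp only [finCongr_apply, Fin.coe_cast, Fin.coe_castAdd, Fin.coe_natAdd]; omega)

lemma sum_dite (hk : k ≤ n) (f : (i : Fin n) → (i : ℕ) < k → ℝ)
    (g : (i : Fin n) → ¬ (i : ℕ) < k → ℝ) :
    (∑ i : Fin n, if h : (i : ℕ) < k then f i h else g i h)
      = (∑ i : Fin k, f ⟨(i : ℕ), lt_of_lt_of_le i.isLt hk⟩ i.isLt)
        + ∑ j : Fin (n - k), g ⟨(j : ℕ) + k, by have := j.isLt; omega⟩
            ((by omega : ¬ ((j : ℕ) + k < k))) := by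
  rw [sum_split hk]
  congr 1
  · exact Finset.sum_congr rfl fun i _ => dif_pos i.isLt
  · exact Finset.sum_congr rfl fun j _ => dif_neg ((by omega : ¬ ((j : ℕ) + k < k)))

lemma graphMap_x_lo (φ : MP n k → EuclideanSpace ℝ (Fin k)) (a : MP n k) (i : Fin k)
    (h : (i : ℕ) < n) : xPart (graphMap φ a) ⟨(i : ℕ), h⟩ = φ a i := by
  simp [graphMap, hMul, iota, jmap, xPart, mkH, i.isLt]

lemma graphMap_x_hi (φ : MP n k → EuclideanSpace ℝ (Fin k)) (a : MP n k)
    (j : Fin (n - k)) (h : (j : ℕ) + k < n) :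
    xPart (graphMap φ a) ⟨(j : ℕ) + k, h⟩ = vPart a j := by
  have h' : ¬ ((j : ℕ) + k < k) := by omega
  simp [graphMap, hMul, iota, jmap, xPart, mkH, h', Nat.add_sub_cancel]

lemma graphMap_y_lo (φ : MP n k → EuclideanSpace ℝ (Fin k)) (a : MP n k) (i : Fin k)
    (h : (i : ℕ) < n) : yPart (graphMap φ a) ⟨(i : ℕ), h⟩ = etaPart a i := by
  simp [graphMap, hMul, iota, jmap, yPart, mkH, i.isLt]

lemma graphMap_y_hi (φ : MP n k → EuclideanSpace ℝ (Fin k)) (a : MP n k)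
    (j : Fin (n - k)) (h : (j : ℕ) + k < n) :
    yPart (graphMap φ a) ⟨(j : ℕ) + k, h⟩ = wPart a j := by
  have h' : ¬ ((j : ℕ) + k < k) := by omega
  simp [graphMap, hMul, iota, jmap, yPart, mkH, h', Nat.add_sub_cancel]

lemma xPart_hInv (p : HP n) (i : Fin n) : xPart (hInv p) i = -(xPart p i) := rfl
lemma yPart_hInv (p : HP n) (i : Fin n) : yPart (hInv p) i = -(yPart p i) := rfl
lemma tPart_hInv (p : HP n) : tPart (hInv p) = -(tPart p) := rfl

lemma xPart_hMul (p q : HP n) (i : Fin n) :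
    xPart (hMul p q) i = xPart p i + xPart q i := rfl
lemma yPart_hMul (p q : HP n) (i : Fin n) :
    yPart (hMul p q) i = yPart p i + yPart q i := rfl

lemma tPart_graphMap (hk : k ≤ n) (φ : MP n k → EuclideanSpace ℝ (Fin k)) (a : MP n k) :
    tPart (graphMap φ a) = tauPart a - (1 / 2) * ∑ i : Fin k, φ a i * etaPart a i := by
  have e : tPart (graphMap φ a) = tauPart a + 0 + (1 / 2) * ∑ i : Fin n,
      (xPart (iota a) i * yPart (jmap (φ a) : HP n) i
        - xPart (jmap (φ a) : HP n) i * yPart (iota a) i) := rfl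
  have hg : ∀ i : Fin n,
      xPart (iota a) i * yPart (jmap (φ a) : HP n) i
        - xPart (jmap (φ a) : HP n) i * yPart (iota a) i
      = (if h : (i : ℕ) < k then -(φ a ⟨(i : ℕ), h⟩ * etaPart a ⟨(i : ℕ), h⟩) else 0) := by
    intro i
    by_cases h : (i : ℕ) < k <;> simp [iota, jmap, xPart, yPart, mkH, h]
  rw [e, Finset.sum_congr rfl fun i _ => hg i, sum_dite hk]
  simp
  ring
end Statement7Aux

section Statement7Quot

variable {n k : ℕ}

lemma quot_v (hk : k ≤ n) (φ : MP n k → EuclideanSpace ℝ (Fin k)) (a b : MP n k)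
    (j : Fin (n - k)) :
    vPart (piM hk (hMul (hInv (graphMap φ a)) (graphMap φ b))) j
      = vPart b j - vPart a j := by
  have hjk : (j : ℕ) + k < n := by have := j.isLt; omega
  have e : vPart (piM hk (hMul (hInv (graphMap φ a)) (graphMap φ b))) j
      = xPart (hInv (graphMap φ a)) ⟨(j : ℕ) + k, hjk⟩
        + xPart (graphMap φ b) ⟨(j : ℕ) + k, hjk⟩ := rfl
  rw [e, xPart_hInv, graphMap_x_hi, graphMap_x_hi]
  ring

lemma quot_eta (hk : k ≤ n) (φ : MP n k → EuclideanSpace ℝ (Fin k)) (a b : MP n k)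
    (i : Fin k) :
    etaPart (piM hk (hMul (hInv (graphMap φ a)) (graphMap φ b))) i
      = etaPart b i - etaPart a i := by
  have hik : (i : ℕ) < n := lt_of_lt_of_le i.isLt hk
  have e : etaPart (piM hk (hMul (hInv (graphMap φ a)) (graphMap φ b))) i
      = yPart (hInv (graphMap φ a)) ⟨(i : ℕ), hik⟩
        + yPart (graphMap φ b) ⟨(i : ℕ), hik⟩ := rfl
  rw [e, yPart_hInv, graphMap_y_lo, graphMap_y_lo]
  ring

lemma quot_w (hk : k ≤ n) (φ : MP n k → EuclideanSpace ℝ (Fin k)) (a b : MP n k)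
    (j : Fin (n - k)) :
    wPart (piM hk (hMul (hInv (graphMap φ a)) (graphMap φ b))) j
      = wPart b j - wPart a j := by
  have hjk : (j : ℕ) + k < n := by have := j.isLt; omega
  have e : wPart (piM hk (hMul (hInv (graphMap φ a)) (graphMap φ b))) j
      = yPart (hInv (graphMap φ a)) ⟨(j : ℕ) + k, hjk⟩
        + yPart (graphMap φ b) ⟨(j : ℕ) + k, hjk⟩ := rfl
  rw [e, yPart_hInv, graphMap_y_hi, graphMap_y_hi]
  ring

lemma sum_dite' (hk : k ≤ n) (F : Fin n → ℝ) (f : Fin k → ℝ) (g : Fin (n - k) → ℝ)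
    (hf : ∀ i : Fin k, F ⟨(i : ℕ), lt_of_lt_of_le i.isLt hk⟩ = f i)
    (hg : ∀ j : Fin (n - k), F ⟨(j : ℕ) + k, by have := j.isLt; omega⟩ = g j) :
    ∑ i : Fin n, F i = (∑ i : Fin k, f i) + ∑ j : Fin (n - k), g j := by
  rw [sum_split hk]
  congr 1
  · exact Finset.sum_congr rfl fun i _ => hf i
  · exact Finset.sum_congr rfl fun j _ => hg j

lemma quot_tau (hk : k ≤ n) (φ : MP n k → EuclideanSpace ℝ (Fin k)) (a b : MP n k) :
    tauPart (piM hk (hMul (hInv (graphMap φ a)) (graphMap φ b)))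
      = tauPart b - tauPart a - (∑ i : Fin k, φ a i * (etaPart b i - etaPart a i))
        + (1 / 2) * ∑ j : Fin (n - k),
            (vPart b j * wPart a j - vPart a j * wPart b j) := by
  set A := graphMap φ a with hA
  set B := graphMap φ b with hB
  have e : tauPart (piM hk (hMul (hInv A) B))
      = tPart (hMul (hInv A) B) + (1 / 2) * ∑ i : Fin k,
          xPart (hMul (hInv A) B) ⟨(i : ℕ), lt_of_lt_of_le i.isLt hk⟩
            * yPart (hMul (hInv A) B) ⟨(i : ℕ), lt_of_lt_of_le i.isLt hk⟩ := rfl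
  have ex : ∀ i : Fin k,
      xPart (hMul (hInv A) B) ⟨(i : ℕ), lt_of_lt_of_le i.isLt hk⟩
        * yPart (hMul (hInv A) B) ⟨(i : ℕ), lt_of_lt_of_le i.isLt hk⟩
      = (φ b i - φ a i) * (etaPart b i - etaPart a i) := by
    intro i
    rw [xPart_hMul, yPart_hMul, xPart_hInv, yPart_hInv, hA, hB,
      graphMap_x_lo, graphMap_x_lo, graphMap_y_lo, graphMap_y_lo]
    ring
  have et : tPart (hMul (hInv A) B)
      = tPart (hInv A) + tPart B + (1 / 2) * ∑ i : Fin n,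
          (xPart (hInv A) i * yPart B i - xPart B i * yPart (hInv A) i) := rfl
  have hsplit : ∑ i : Fin n, (xPart (hInv A) i * yPart B i - xPart B i * yPart (hInv A) i)
      = (∑ i : Fin k, (-(φ a i) * etaPart b i + φ b i * etaPart a i))
        + ∑ j : Fin (n - k), (-(vPart a j) * wPart b j + vPart b j * wPart a j) := by
    refine sum_dite' hk _ _ _ (fun i => ?_) (fun j => ?_)
    · rw [xPart_hInv, yPart_hInv, hA, hB,
        graphMap_x_lo, graphMap_x_lo, graphMap_y_lo, graphMap_y_lo]
      ring
    · rw [xPart_hInv, yPart_hInv, hA, hB,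
        graphMap_x_hi, graphMap_x_hi, graphMap_y_hi, graphMap_y_hi]
      ring
  rw [e, et, hsplit, tPart_hInv, hA, hB, tPart_graphMap hk, tPart_graphMap hk,
    Finset.sum_congr rfl fun i _ => ex i]
  have c6 : (∑ j : Fin (n - k), (-(vPart a j) * wPart b j + vPart b j * wPart a j))
      = ∑ j : Fin (n - k), (vPart b j * wPart a j - vPart a j * wPart b j) :=
    Finset.sum_congr rfl fun j _ => by ring
  have key : (∑ i : Fin k, φ a i * etaPart a i)
      + ((∑ i : Fin k, (-(φ a i) * etaPart b i + φ b i * etaPart a i))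
        + ((∑ i : Fin k, (φ b i - φ a i) * (etaPart b i - etaPart a i))
          + 2 * ∑ i : Fin k, φ a i * (etaPart b i - etaPart a i)))
      = ∑ i : Fin k, φ b i * etaPart b i := by
    rw [Finset.mul_sum, ← Finset.sum_add_distrib, ← Finset.sum_add_distrib,
      ← Finset.sum_add_distrib]
    exact Finset.sum_congr rfl fun i _ => by ring
  rw [c6]
  linarith [key]

end Statement7Quot


/-- Proposition 4.10: if the continuous map `φ` is intrinsic
differentiable at `a ∈ Ω` with intrinsic Jacobian `M`, and `γ : [-δ,δ] → Ω` is any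
integral curve of `W_ℓ^φ` with `γ(0) = a`, then for every `i = 1,…,k` the difference
quotients `(φ_i(γ(s)) - φ_i(γ(0)))/s` converge to `[J^φφ(a)]_{i,ℓ} = M i ℓ` as `s → 0`. -/
theorem statement7 (n k : ℕ) (hn : 1 ≤ n) (hk1 : 1 ≤ k) (hk : k ≤ n)
    (Ω : Set (MP n k)) (hΩ : IsOpen Ω)
    (φ : MP n k → EuclideanSpace ℝ (Fin k)) (hφ : ContinuousOn φ Ω)
    (a : MP n k) (ha : a ∈ Ω)
    (M : Matrix (Fin k) (HorIdx n k) ℝ) (hdiff : IDAtWith hk Ω φ a M)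
    (ℓ : HorIdx n k) (δ : ℝ) (hδ : 0 < δ) (γ : ℝ → MP n k)
    (hγΩ : ∀ s ∈ Set.Icc (-δ) δ, γ s ∈ Ω)
    (hγd : ∀ s ∈ Set.Icc (-δ) δ, HasDerivAt γ (Wfield φ ℓ (γ s)) s)
    (hγ0 : γ 0 = a) :
    ∀ i : Fin k,
      Tendsto (fun s : ℝ => (φ (γ s) i - φ (γ 0) i) / s) (𝓝[≠] (0 : ℝ)) (𝓝 (M i ℓ)) := by
  intro i
  have h0Icc : (0 : ℝ) ∈ Set.Icc (-δ) δ := ⟨by linarith, by linarith⟩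
  set τidx : MIdxT n k := Sum.inr (Sum.inr (Sum.inr ())) with hτidx
  set Meℓ : EuclideanSpace ℝ (Fin k) := WithLp.toLp 2 (fun i' => M i' ℓ) with hMeℓ
  set C : ℝ := ‖Meℓ‖ with hCdef
  have hC0 : 0 ≤ C := norm_nonneg _
  set K : ℝ := 3 + 2 * C with hKdef
  have hK0 : 0 < K := by rw [hKdef]; linarith
  set emb : HorIdx n k → MIdxT n k :=
    Sum.elim Sum.inl (Sum.elim (fun i' => Sum.inr (Sum.inl i'))
      (fun j => Sum.inr (Sum.inr (Sum.inl j)))) with hembdef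
  -- derivatives of single coordinates along γ
  have hcd : ∀ (m : MIdxT n k), ∀ u ∈ Set.Icc (-δ) δ,
      HasDerivAt (fun r => γ r m) (Wfield φ ℓ (γ u) m) u := by
    intro m u hu
    exact (EuclideanSpace.proj m).hasFDerivAt.comp_hasDerivAt u (hγd u hu)
  -- coordinates with constant derivative are affine in s
  have hlinIdx : ∀ (m : MIdxT n k) (c : ℝ),
      (∀ u ∈ Set.Icc (-δ) δ, Wfield φ ℓ (γ u) m = c) →
      ∀ s ∈ Set.Icc (-δ) δ, γ s m = a m + s * c := by
    intro m c hc s hs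
    have hfd : ∀ u ∈ Set.Icc (-δ) δ,
        HasDerivWithinAt (fun r => γ r m - r * c) 0 (Set.Icc (-δ) δ) u := by
      intro u hu
      have h1 := hcd m u hu
      rw [hc u hu] at h1
      have h1 : HasDerivAt (fun r => γ r m) c u := h1
      have h2 : HasDerivAt (fun r => γ r m - r * c) (c - c) u := h1.sub (hasDerivAt_mul_const c)
      rw [sub_self] at h2
      exact h2.hasDerivWithinAt
    have key := Convex.norm_image_sub_le_of_norm_hasDerivWithin_le
      (C := 0) (f' := fun _ => (0 : ℝ)) hfd (fun u _ => by simp) (convex_Icc _ _) h0Icc hs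
    simp only [hγ0, Real.norm_eq_abs, zero_mul, mul_zero, sub_zero] at key
    have h2 := abs_eq_zero.mp (le_antisymm key (abs_nonneg _))
    linarith
  -- the horizontal coordinates move with unit speed in direction ℓ
  have hW0c : ∀ (m : HorIdx n k), ∀ u ∈ Set.Icc (-δ) δ,
      Wfield φ ℓ (γ u) (emb m) = (if m = ℓ then (1 : ℝ) else 0) := by
    intro m u hu
    rcases ℓ with j0 | i0 | j0 <;> rcases m with j | i' | j <;>
      simp [Wfield, mkM, hembdef, Pi.single_apply, vPart, etaPart, wPart]
  have hcoord : ∀ (m : HorIdx n k), ∀ s ∈ Set.Icc (-δ) δ,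
      γ s (emb m) = a (emb m) + s * (if m = ℓ then (1 : ℝ) else 0) :=
    fun m s hs => hlinIdx (emb m) _ (hW0c m) s hs
  have hvcoord : ∀ s ∈ Set.Icc (-δ) δ, ∀ j : Fin (n - k),
      vPart (γ s) j = vPart a j
        + s * (if (Sum.inl j : HorIdx n k) = ℓ then (1 : ℝ) else 0) :=
    fun s hs j => hcoord (Sum.inl j) s hs
  have hηcoord : ∀ s ∈ Set.Icc (-δ) δ, ∀ i' : Fin k,
      etaPart (γ s) i' = etaPart a i'
        + s * (if (Sum.inr (Sum.inl i') : HorIdx n k) = ℓ then (1 : ℝ) else 0) :=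
    fun s hs i' => hcoord (Sum.inr (Sum.inl i')) s hs
  have hwcoord : ∀ s ∈ Set.Icc (-δ) δ, ∀ j : Fin (n - k),
      wPart (γ s) j = wPart a j
        + s * (if (Sum.inr (Sum.inr j) : HorIdx n k) = ℓ then (1 : ℝ) else 0) :=
    fun s hs j => hcoord (Sum.inr (Sum.inr j)) s hs
  -- vertical coordinate of the quotient
  set q : ℝ → ℝ := fun s =>
    tauPart (piM hk (hMul (hInv (graphMap φ a)) (graphMap φ (γ s)))) with hqdef
  -- the intrinsic differential along the curve
  have hpiHor : ∀ (p : MP n k) (m : HorIdx n k), piHor p m = p (emb m) := by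
    intro p m; rcases m with j | i' | j <;> rfl
  have hofM : ∀ s ∈ Set.Icc (-δ) δ, ofMatrix M (starMul (-a) (γ s)) = s • Meℓ := by
    intro s hs
    ext i'
    have hph : ∀ m : HorIdx n k, piHor (starMul (-a) (γ s)) m
        = s * (if m = ℓ then (1 : ℝ) else 0) := by
      intro m
      have h1 : piHor (starMul (-a) (γ s)) m
          = -(a (emb m)) + γ s (emb m)
            + ((1 / 2) * ∑ j : Fin (n - k),
                (vPart (-a) j * wPart (γ s) j - vPart (γ s) j * wPart (-a) j))
              * tauUnit (emb m) := by
        rw [hpiHor]; rfl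
      have h2 : tauUnit (emb m) = 0 := by rcases m with j | i' | j <;> rfl
      rw [h1, h2, hcoord m s hs]; ring
    show Matrix.mulVec M (piHor (starMul (-a) (γ s))) i' = (s • Meℓ) i'
    have h3 : (s • Meℓ) i' = s * M i' ℓ := rfl
    have h4 : Matrix.mulVec M (piHor (starMul (-a) (γ s))) i'
        = ∑ m, M i' m * piHor (starMul (-a) (γ s)) m := rfl
    rw [h3, h4]
    calc (∑ m, M i' m * piHor (starMul (-a) (γ s)) m)
        = ∑ m, (if m = ℓ then M i' m * s else 0) := by
          refine Finset.sum_congr rfl fun m _ => ?_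
          rw [hph m]; by_cases h : m = ℓ <;> simp [h]
      _ = M i' ℓ * s := by rw [Finset.sum_ite_eq' Finset.univ ℓ]; simp
      _ = s * M i' ℓ := mul_comm _ _
  -- formula for the graph distance along the curve
  have hdPhi : ∀ s ∈ Set.Icc (-δ) δ,
      dPhi hk φ (γ s) a = max |s| (Real.sqrt |q s|) := by
    intro s hs
    show normM (piM hk (hMul (hInv (graphMap φ a)) (graphMap φ (γ s)))) = _
    have hv2 : ∀ j : Fin (n - k),
        vPart (piM hk (hMul (hInv (graphMap φ a)) (graphMap φ (γ s)))) j
          = s * (if (Sum.inl j : HorIdx n k) = ℓ then (1 : ℝ) else 0) := fun j => by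
      rw [quot_v hk, hvcoord s hs j]; ring
    have hη2 : ∀ i' : Fin k,
        etaPart (piM hk (hMul (hInv (graphMap φ a)) (graphMap φ (γ s)))) i'
          = s * (if (Sum.inr (Sum.inl i') : HorIdx n k) = ℓ then (1 : ℝ) else 0) :=
      fun i' => by rw [quot_eta hk, hηcoord s hs i']; ring
    have hw2 : ∀ j : Fin (n - k),
        wPart (piM hk (hMul (hInv (graphMap φ a)) (graphMap φ (γ s)))) j
          = s * (if (Sum.inr (Sum.inr j) : HorIdx n k) = ℓ then (1 : ℝ) else 0) :=
      fun j => by rw [quot_w hk, hwcoord s hs j]; ring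
    have hsq_ite : ∀ (c : Prop) [Decidable c],
        (s * (if c then (1 : ℝ) else 0)) ^ 2 = if c then s ^ 2 else 0 := by
      intro c inst; by_cases h : c <;> simp [h]
    simp only [normM]
    have hhor : (∑ j, vPart (piM hk (hMul (hInv (graphMap φ a)) (graphMap φ (γ s)))) j ^ 2
          + ∑ i', etaPart (piM hk (hMul (hInv (graphMap φ a)) (graphMap φ (γ s)))) i' ^ 2
          + ∑ j, wPart (piM hk (hMul (hInv (graphMap φ a)) (graphMap φ (γ s)))) j ^ 2)
        = s ^ 2 := by
      have e1 : ∑ j, vPart (piM hk (hMul (hInv (graphMap φ a)) (graphMap φ (γ s)))) j ^ 2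
          = ∑ j : Fin (n - k), (if (Sum.inl j : HorIdx n k) = ℓ then s ^ 2 else 0) :=
        Finset.sum_congr rfl fun j _ => by rw [hv2 j, hsq_ite]
      have e2 : ∑ i', etaPart (piM hk (hMul (hInv (graphMap φ a)) (graphMap φ (γ s)))) i' ^ 2
          = ∑ i' : Fin k, (if (Sum.inr (Sum.inl i') : HorIdx n k) = ℓ then s ^ 2 else 0) :=
        Finset.sum_congr rfl fun i' _ => by rw [hη2 i', hsq_ite]
      have e3 : ∑ j, wPart (piM hk (hMul (hInv (graphMap φ a)) (graphMap φ (γ s)))) j ^ 2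
          = ∑ j : Fin (n - k), (if (Sum.inr (Sum.inr j) : HorIdx n k) = ℓ then s ^ 2 else 0) :=
        Finset.sum_congr rfl fun j _ => by rw [hw2 j, hsq_ite]
      rw [e1, e2, e3]
      rcases ℓ with j0 | i0 | j0 <;>
        simp [Finset.sum_ite_eq', Sum.inl.injEq, Sum.inr.injEq]
    rw [hhor, Real.sqrt_sq_eq_abs, hqdef]
  -- bound on the vertical coordinate of the quotient
  have hτbound : ∀ s ∈ Set.Icc (-δ) δ, ∀ B : ℝ, 0 ≤ B →
      (∀ u ∈ Set.uIcc 0 s, ‖φ (γ u) - φ a‖ ≤ B) → |q s| ≤ B * |s| := by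
    intro s hs B hB hb
    have husub : Set.uIcc 0 s ⊆ Set.Icc (-δ) δ := Set.uIcc_subset_Icc h0Icc hs
    have hq : q s = tauPart (γ s) - tauPart a
        - (∑ i' : Fin k, φ a i' * (etaPart (γ s) i' - etaPart a i'))
        + (1 / 2) * ∑ j : Fin (n - k),
            (vPart (γ s) j * wPart a j - vPart a j * wPart (γ s) j) :=
      quot_tau hk φ a (γ s)
    rcases ℓ with j0 | i0 | j0
    · -- ℓ is a v-direction
      have hηc : ∀ u ∈ Set.Icc (-δ) δ, ∀ i' : Fin k,
          etaPart (γ u) i' = etaPart a i' := fun u hu i' => by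
        simpa using hηcoord u hu i'
      have hwc : ∀ u ∈ Set.Icc (-δ) δ, ∀ j : Fin (n - k),
          wPart (γ u) j = wPart a j := fun u hu j => by
        simpa using hwcoord u hu j
      have hvc : ∀ j : Fin (n - k), vPart (γ s) j
          = vPart a j + s * (if j = j0 then (1 : ℝ) else 0) := fun j => by
        simpa [Sum.inl.injEq] using hvcoord s hs j
      have hτlin : tauPart (γ s) = tauPart a + s * (-(1 / 2) * wPart a j0) := by
        refine hlinIdx τidx (-(1 / 2) * wPart a j0) (fun u hu => ?_) s hs
        show -(1 / 2) * wPart (γ u) j0 = -(1 / 2) * wPart a j0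
        rw [hwc u hu j0]
      have hSphi : (∑ i' : Fin k, φ a i' * (etaPart (γ s) i' - etaPart a i')) = 0 := by
        simp [hηc s hs]
      have hSvw : (∑ j : Fin (n - k),
          (vPart (γ s) j * wPart a j - vPart a j * wPart (γ s) j))
          = s * wPart a j0 := by
        have hpt : ∀ j : Fin (n - k),
            vPart (γ s) j * wPart a j - vPart a j * wPart (γ s) j
              = (if j = j0 then s * wPart a j else 0) := fun j => by
          rw [hvc j, hwc s hs j]; by_cases h : j = j0 <;> simp [h] <;> ring
        rw [Finset.sum_congr rfl fun j _ => hpt j, Finset.sum_ite_eq' Finset.univ j0]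
        simp
      have hqeq : q s = 0 := by rw [hq, hτlin, hSphi, hSvw]; ring
      rw [hqeq]
      simpa using mul_nonneg hB (abs_nonneg s)
    · -- ℓ is an η-direction
      have hvc : ∀ u ∈ Set.Icc (-δ) δ, ∀ j : Fin (n - k),
          vPart (γ u) j = vPart a j := fun u hu j => by
        simpa using hvcoord u hu j
      have hwc : ∀ u ∈ Set.Icc (-δ) δ, ∀ j : Fin (n - k),
          wPart (γ u) j = wPart a j := fun u hu j => by
        simpa using hwcoord u hu j
      have hηc : ∀ i' : Fin k, etaPart (γ s) i'
          = etaPart a i' + s * (if i' = i0 then (1 : ℝ) else 0) := fun i' => by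
        simpa [Sum.inr.injEq, Sum.inl.injEq] using hηcoord s hs i'
      have hSvw : (∑ j : Fin (n - k),
          (vPart (γ s) j * wPart a j - vPart a j * wPart (γ s) j)) = 0 := by
        simp [hvc s hs, hwc s hs]
      have hSphi : (∑ i' : Fin k, φ a i' * (etaPart (γ s) i' - etaPart a i'))
          = s * φ a i0 := by
        have hpt : ∀ i' : Fin k, φ a i' * (etaPart (γ s) i' - etaPart a i')
            = (if i' = i0 then s * φ a i' else 0) := fun i' => by
          rw [hηc i']; by_cases h : i' = i0 <;> simp [h] <;> ring
        rw [Finset.sum_congr rfl fun i' _ => hpt i', Finset.sum_ite_eq' Finset.univ i0]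
        simp
      have hqeq : q s = tauPart (γ s) - s * φ a i0 - tauPart a := by
        rw [hq, hSphi, hSvw]; ring
      have hfd : ∀ u ∈ Set.uIcc 0 s,
          HasDerivWithinAt (fun r => tauPart (γ r) - r * φ a i0)
            (φ (γ u) i0 - φ a i0) (Set.uIcc 0 s) u := by
        intro u hu
        have h1 := hcd τidx u (husub hu)
        have h2 : Wfield φ (Sum.inr (Sum.inl i0)) (γ u) τidx = φ (γ u) i0 := rfl
        rw [h2] at h1
        exact (h1.sub (hasDerivAt_mul_const (φ a i0))).hasDerivWithinAt
      have hbd : ∀ u ∈ Set.uIcc 0 s, ‖φ (γ u) i0 - φ a i0‖ ≤ B := by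
        intro u hu
        have h3 : φ (γ u) i0 - φ a i0 = (φ (γ u) - φ a) i0 := rfl
        rw [Real.norm_eq_abs, h3]
        exact le_trans (euclid_abs_le _ i0) (hb u hu)
      have key := Convex.norm_image_sub_le_of_norm_hasDerivWithin_le hfd hbd
        (convex_uIcc 0 s) Set.left_mem_uIcc Set.right_mem_uIcc
      simp only [hγ0, Real.norm_eq_abs, zero_mul, sub_zero] at key
      rw [hqeq]
      exact key
    · -- ℓ is a w-direction
      have hηc : ∀ u ∈ Set.Icc (-δ) δ, ∀ i' : Fin k,
          etaPart (γ u) i' = etaPart a i' := fun u hu i' => by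
        simpa using hηcoord u hu i'
      have hvc : ∀ u ∈ Set.Icc (-δ) δ, ∀ j : Fin (n - k),
          vPart (γ u) j = vPart a j := fun u hu j => by
        simpa using hvcoord u hu j
      have hwc : ∀ j : Fin (n - k), wPart (γ s) j
          = wPart a j + s * (if j = j0 then (1 : ℝ) else 0) := fun j => by
        simpa [Sum.inr.injEq] using hwcoord s hs j
      have hτlin : tauPart (γ s) = tauPart a + s * ((1 / 2) * vPart a j0) := by
        refine hlinIdx τidx ((1 / 2) * vPart a j0) (fun u hu => ?_) s hs
        show (1 / 2) * vPart (γ u) j0 = (1 / 2) * vPart a j0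
        rw [hvc u hu j0]
      have hSphi : (∑ i' : Fin k, φ a i' * (etaPart (γ s) i' - etaPart a i')) = 0 := by
        simp [hηc s hs]
      have hSvw : (∑ j : Fin (n - k),
          (vPart (γ s) j * wPart a j - vPart a j * wPart (γ s) j))
          = -(s * vPart a j0) := by
        have hpt : ∀ j : Fin (n - k),
            vPart (γ s) j * wPart a j - vPart a j * wPart (γ s) j
              = (if j = j0 then -(s * vPart a j) else 0) := fun j => by
          rw [hvc s hs j, hwc j]; by_cases h : j = j0 <;> simp [h] <;> ring
        rw [Finset.sum_congr rfl fun j _ => hpt j, Finset.sum_ite_eq' Finset.univ j0]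
        simp
      have hqeq : q s = 0 := by rw [hq, hτlin, hSphi, hSvw]; ring
      rw [hqeq]
      simpa using mul_nonneg hB (abs_nonneg s)
  -- main estimate from intrinsic differentiability
  have hEst : ∀ ε' > (0 : ℝ), ∃ r > (0 : ℝ), r ≤ δ ∧ ∀ s : ℝ, |s| ≤ r →
      ‖φ (γ s) - φ a - s • Meℓ‖ ≤ ε' * max |s| (Real.sqrt |q s|) := by
    intro ε' hε'
    obtain ⟨δ₀, hδ₀, hd⟩ := hdiff ε' hε'
    have hcont : ContinuousAt γ 0 := (hγd 0 h0Icc).continuousAt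
    obtain ⟨r', hr', hrc⟩ := Metric.continuousAt_iff.mp hcont δ₀ hδ₀
    refine ⟨min (r' / 2) δ, by positivity, min_le_right _ _, ?_⟩
    intro s hsle
    have hsδ : s ∈ Set.Icc (-δ) δ :=
      Set.mem_Icc.mpr (abs_le.mp (le_trans hsle (min_le_right _ _)))
    have hdist : ‖γ s - a‖ < δ₀ := by
      rw [← hγ0, ← dist_eq_norm]
      exact hrc (by
        rw [Real.dist_eq, sub_zero]
        exact lt_of_le_of_lt (le_trans hsle (min_le_left _ _)) (by linarith))
    have h1 := hd (γ s) (hγΩ s hsδ) hdist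
    rw [hofM s hsδ, hdPhi s hsδ] at h1
    exact h1
  -- continuity of φ ∘ γ
  have hγc : ContinuousOn γ (Set.Icc (-δ) δ) :=
    fun u hu => (hγd u hu).continuousAt.continuousWithinAt
  have hFc : ContinuousOn (fun u => φ (γ u) - φ a) (Set.Icc (-δ) δ) :=
    ((hφ.comp hγc fun u hu => hγΩ u hu).sub continuousOn_const)
  -- bootstrap: φ ∘ γ is Lipschitz at 0
  have hBoot : ∃ r₁ > (0 : ℝ), r₁ ≤ δ ∧ ∀ s : ℝ, |s| ≤ r₁ →
      ‖φ (γ s) - φ a‖ ≤ K * |s| := by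
    obtain ⟨r, hr0, hrδ, hr⟩ := hEst 1 one_pos
    refine ⟨r, hr0, hrδ, ?_⟩
    intro s hsr
    rcases eq_or_ne s 0 with rfl | hs0
    · simp [hγ0]
    · have hsδ' : s ∈ Set.Icc (-δ) δ :=
        Set.mem_Icc.mpr (abs_le.mp (le_trans hsr hrδ))
      have husub : Set.uIcc 0 s ⊆ Set.Icc (-δ) δ := Set.uIcc_subset_Icc h0Icc hsδ'
      have hgc : ContinuousOn (fun u => ‖φ (γ u) - φ a‖) (Set.uIcc 0 s) :=
        (hFc.mono husub).norm
      obtain ⟨u0, hu0mem, hu0max⟩ := isCompact_uIcc.exists_isMaxOn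
        ⟨0, Set.left_mem_uIcc⟩ hgc
      set m : ℝ := ‖φ (γ u0) - φ a‖ with hmdef
      have hm0 : 0 ≤ m := norm_nonneg _
      have husle : |u0| ≤ |s| := abs_le_abs_of_mem_uIcc hu0mem
      have hu0r : |u0| ≤ r := le_trans husle hsr
      have hu0Icc : u0 ∈ Set.Icc (-δ) δ := husub hu0mem
      have hest := hr u0 hu0r
      have hτ : |q u0| ≤ m * |u0| := by
        refine hτbound u0 hu0Icc m hm0 (fun u hu => ?_)
        exact hu0max (Set.uIcc_subset_uIcc Set.left_mem_uIcc hu0mem hu)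
      have hsqb : Real.sqrt |q u0| ≤ Real.sqrt (m * |s|) := by
        apply Real.sqrt_le_sqrt
        calc |q u0| ≤ m * |u0| := hτ
          _ ≤ m * |s| := mul_le_mul_of_nonneg_left husle hm0
      have hsq2 : Real.sqrt (m * |s|) ≤ (m + |s|) / 2 := by
        have h1 : m * |s| ≤ ((m + |s|) / 2) ^ 2 := by nlinarith [sq_nonneg (m - |s|)]
        calc Real.sqrt (m * |s|) ≤ Real.sqrt (((m + |s|) / 2) ^ 2) :=
              Real.sqrt_le_sqrt h1
          _ = (m + |s|) / 2 := by
              rw [Real.sqrt_sq (by positivity)]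
      have t2 : m ≤ ‖φ (γ u0) - φ a - u0 • Meℓ‖ + ‖u0 • Meℓ‖ := by
        rw [hmdef]
        calc ‖φ (γ u0) - φ a‖ = ‖(φ (γ u0) - φ a - u0 • Meℓ) + u0 • Meℓ‖ := by
              rw [sub_add_cancel]
          _ ≤ _ := norm_add_le _ _
      have t3 : ‖u0 • Meℓ‖ = |u0| * C := by
        rw [norm_smul, Real.norm_eq_abs, hCdef]
      have t4 : max |u0| (Real.sqrt |q u0|) ≤ |s| + (m + |s|) / 2 := by
        apply max_le
        · linarith [husle, abs_nonneg s, hm0]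
        · linarith [hsqb, hsq2, abs_nonneg s]
      have hCu : C * |u0| ≤ C * |s| := mul_le_mul_of_nonneg_left husle hC0
      have t3' : ‖u0 • Meℓ‖ ≤ C * |s| := by rw [t3, mul_comm]; exact hCu
      have h5 : ‖φ (γ u0) - φ a - u0 • Meℓ‖ ≤ |s| + (m + |s|) / 2 := by
        have h5' := hest
        rw [one_mul] at h5'
        exact le_trans h5' t4
      have hm_le : m ≤ K * |s| := by
        have h6 : m ≤ |s| + (m + |s|) / 2 + C * |s| := by linarith [t2, t3', h5]
        have h7 : (3 + 2 * C) * |s| = 3 * |s| + 2 * (C * |s|) := by ring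
        rw [hKdef, h7]
        linarith [h6]
      calc ‖φ (γ s) - φ a‖ ≤ m := hu0max Set.right_mem_uIcc
        _ ≤ K * |s| := hm_le
  -- conclusion
  rw [Metric.tendsto_nhdsWithin_nhds]
  intro ε hε
  obtain ⟨r₁, hr₁0, hr₁δ, hboot⟩ := hBoot
  have hsqK : (0 : ℝ) ≤ Real.sqrt K := Real.sqrt_nonneg _
  have hden : (0 : ℝ) < 1 + Real.sqrt K := by linarith
  set ε₀ : ℝ := ε / (2 * (1 + Real.sqrt K)) with hε₀def
  have hε₀pos : 0 < ε₀ := by rw [hε₀def]; positivity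
  obtain ⟨r, hr0, hrδ, hest⟩ := hEst ε₀ hε₀pos
  refine ⟨min r r₁, by positivity, ?_⟩
  intro s hsne hsd
  have hs0 : s ≠ 0 := Set.mem_compl_singleton_iff.mp hsne
  have habs : |s| < min r r₁ := by rwa [Real.dist_eq, sub_zero] at hsd
  have hsr : |s| ≤ r := le_of_lt (lt_of_lt_of_le habs (min_le_left _ _))
  have hsr₁ : |s| ≤ r₁ := le_of_lt (lt_of_lt_of_le habs (min_le_right _ _))
  have hsδ' : s ∈ Set.Icc (-δ) δ := Set.mem_Icc.mpr (abs_le.mp (le_trans hsr hrδ))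
  have hb : ∀ u ∈ Set.uIcc 0 s, ‖φ (γ u) - φ a‖ ≤ K * |s| := by
    intro u hu
    have h1 : |u| ≤ |s| := abs_le_abs_of_mem_uIcc hu
    calc ‖φ (γ u) - φ a‖ ≤ K * |u| := hboot u (le_trans h1 hsr₁)
      _ ≤ K * |s| := mul_le_mul_of_nonneg_left h1 hK0.le
  have hτ : |q s| ≤ (K * |s|) * |s| := hτbound s hsδ' (K * |s|) (by positivity) hb
  have hτ' : |q s| ≤ K * |s| ^ 2 := by
    calc |q s| ≤ (K * |s|) * |s| := hτ
      _ = K * |s| ^ 2 := by ring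
  have hsq : Real.sqrt |q s| ≤ Real.sqrt K * |s| := by
    calc Real.sqrt |q s| ≤ Real.sqrt (K * |s| ^ 2) := Real.sqrt_le_sqrt hτ'
      _ = Real.sqrt K * |s| := by
          rw [Real.sqrt_mul hK0.le, Real.sqrt_sq_eq_abs, abs_abs]
  have hexp : (1 + Real.sqrt K) * |s| = |s| + Real.sqrt K * |s| := by ring
  have hmax : max |s| (Real.sqrt |q s|) ≤ (1 + Real.sqrt K) * |s| := by
    apply max_le
    · rw [hexp]
      have := mul_nonneg hsqK (abs_nonneg s)
      linarith
    · rw [hexp]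
      linarith [hsq, abs_nonneg s]
  have hnum := hest s hsr
  have hcomp : |(φ (γ s) i - φ a i) - s * M i ℓ| ≤ ‖φ (γ s) - φ a - s • Meℓ‖ := by
    have h1 : (φ (γ s) - φ a - s • Meℓ) i = (φ (γ s) i - φ a i) - s * M i ℓ := rfl
    rw [← h1]
    exact euclid_abs_le _ i
  have habs0 : 0 < |s| := abs_pos.mpr hs0
  rw [Real.dist_eq, hγ0]
  have heq : (φ (γ s) i - φ a i) / s - M i ℓ
      = ((φ (γ s) i - φ a i) - s * M i ℓ) / s := by field_simp
  rw [heq, abs_div]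
  have h2 : |(φ (γ s) i - φ a i) - s * M i ℓ| ≤ ε₀ * ((1 + Real.sqrt K) * |s|) :=
    le_trans hcomp (le_trans hnum (mul_le_mul_of_nonneg_left hmax hε₀pos.le))
  have h3 : |(φ (γ s) i - φ a i) - s * M i ℓ| / |s| ≤ ε₀ * (1 + Real.sqrt K) := by
    rw [div_le_iff₀ habs0]
    calc |(φ (γ s) i - φ a i) - s * M i ℓ| ≤ ε₀ * ((1 + Real.sqrt K) * |s|) := h2
      _ = ε₀ * (1 + Real.sqrt K) * |s| := by ring
  have h4 : ε₀ * (1 + Real.sqrt K) = ε / 2 := by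
    rw [hε₀def]; field_simp
  rw [h4] at h3
  linarith
end HeisGraph
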